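/- arXiv:1507.00286 — 6 statements merged into one kernel-verified Lean document; each statement's English description precedes it below -/
import Mathlib

section
/- Let γ = (r₁e_{i₁}) * ⋯ * (r_n e_{i_n}) be an axis path in ℝ^d with all r_k ≠ 0 and i_k ≠ i_{k+1} for k = 1,…,n−1, and let w* = (i₁,…,i_n) be the associated square free word of length n. Then the signature coefficient of γ at w* equals C_γ(w*) = r₁ r₂ ⋯ r_n, and in particular C_γ(w*) ≠ 0. -/
/-!
Write `F_m(s)` for the coefficient, over `[s, n]`, at the suffix `(i_m, …, i_{n-1})` of the word.
By downward induction on `m`, for `s ∈ [m - 1, n]` it equals `r_m ⋯ r_{n-1}` times the length of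
`(m, m + 1) ∩ (s, ∞)`. In the inductive step the integrand `γ'(u)^{(i_m)} F_{m+1}(u)` is
`r_m ⋯ r_{n-1}` on the segment `(m, m + 1)` and vanishes elsewhere on `[m - 1, n]`: on the
neighbouring segments because the word is square free, and beyond `m + 2` by induction.
-/

open MeasureTheory

/-- The signature coefficient of a path with (a.e.) derivative `D` over the time
interval `[s, t]`, at the word given as a list of letters in `Fin d`:
`sigCoeff D (j₁ :: w) s t = ∫_{s}^{t} D(u)^{(j₁)} · sigCoeff D w u t du`,
which unfolds to the iterated integral over the simplex
`∫_{s<u₁<⋯<u_m<t} D(u₁)^{(j₁)} ⋯ D(u_m)^{(j_m)} du`. -/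
noncomputable def sigCoeff {d : ℕ} (D : ℝ → Fin d → ℝ) : List (Fin d) → ℝ → ℝ → ℝ
  | [], _, _ => 1
  | j :: w, s, t => ∫ u in s..t, D u j * sigCoeff D w u t

/-- The derivative of the axis path `(r₁ e_{i₁}) * ⋯ * (r_n e_{i_n})` parametrized on
`[0, n]`: on the interval `(k-1, k)` it equals `r_k e_{i_k}`. -/
noncomputable def axisDeriv {d n : ℕ} (r : Fin n → ℝ) (i : Fin n → Fin d) (u : ℝ)
    (j : Fin d) : ℝ :=
  ∑ k : Fin n, if (k : ℝ) < u ∧ u < (k : ℝ) + 1 ∧ i k = j then r k else 0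

open Set

lemma Nat.eq_of_mem_Ioo_of_mem_Ioo {k l : ℕ} {u : ℝ} (hk : u ∈ Ioo (k : ℝ) (k + 1))
    (hl : u ∈ Ioo (l : ℝ) (l + 1)) : k = l := by
  have h₁ : (k : ℝ) < l + 1 := hk.1.trans hl.2
  have h₂ : (l : ℝ) < k + 1 := hl.1.trans hk.2
  norm_cast at h₁ h₂
  omega

lemma intervalIntegral.integral_indicator_const_of_subset_Iic {A : Set ℝ} {s N : ℝ} (c : ℝ) (hA : MeasurableSet A)
    (hAN : A ⊆ Iic N) (hsN : s ≤ N) :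
    ∫ u in s..N, A.indicator (fun _ => c) u = volume.real (A ∩ Ioi s) * c := by
  rw [intervalIntegral.integral_of_le hsN, setIntegral_indicator hA, setIntegral_const,
    smul_eq_mul]
  congr 2
  ext u
  exact ⟨fun ⟨⟨hsu, _⟩, hu⟩ => ⟨hu, hsu⟩, fun ⟨hu, hsu⟩ => ⟨⟨hsu, hAN hu⟩, hu⟩⟩

lemma volume_real_Ioo_inter_Ioi_of_le {a s : ℝ} (h : s ≤ a) :
    volume.real (Ioo a (a + 1) ∩ Ioi s) = 1 := by
  rw [inter_eq_left.mpr (Ioo_subset_Ioi_self.trans (Ioi_subset_Ioi h)),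
    Real.volume_real_Ioo_of_le (by linarith)]
  ring

lemma volume_real_Ioo_inter_Ioi_of_ge {a s : ℝ} (h : a + 1 ≤ s) :
    volume.real (Ioo a (a + 1) ∩ Ioi s) = 0 := by
  rw [Ioo_inter_Ioi, Ioo_eq_empty (by simpa using h), measureReal_empty]

section AxisPath

variable {d n : ℕ} (r : Fin n → ℝ) (i : Fin n → Fin d)

lemma exists_of_axisDeriv_ne_zero {u : ℝ} {j : Fin d} (h : axisDeriv r i u j ≠ 0) :
    ∃ k : Fin n, u ∈ Ioo (k : ℝ) (k + 1) ∧ i k = j := by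
  by_contra! hk
  exact h (Finset.sum_eq_zero fun k _ => if_neg fun ⟨h₁, h₂, h₃⟩ => hk k ⟨h₁, h₂⟩ h₃)

lemma axisDeriv_apply_self {k : Fin n} {u : ℝ} (hu : u ∈ Ioo (k : ℝ) (k + 1)) :
    axisDeriv r i u (i k) = r k := by
  rw [axisDeriv, Finset.sum_eq_single k, if_pos ⟨hu.1, hu.2, rfl⟩]
  · exact fun l _ hl => if_neg fun ⟨h₁, h₂, _⟩ =>
      hl (Fin.ext (Nat.eq_of_mem_Ioo_of_mem_Ioo ⟨h₁, h₂⟩ hu))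
  · simp

variable {i}

lemma axisDeriv_eq_zero_of_notMem_Ioo (hi : ∀ k l : Fin n, (k : ℕ) + 1 = l → i k ≠ i l)
    {m : Fin n} {u : ℝ} (h₁ : (m : ℝ) - 1 ≤ u) (h₂ : u < m + 2)
    (hu : u ∉ Ioo (m : ℝ) (m + 1)) : axisDeriv r i u (i m) = 0 := by
  by_contra h
  obtain ⟨k, hk, hki⟩ := exists_of_axisDeriv_ne_zero r i h
  have hk₁ : (k : ℝ) < m + 2 := hk.1.trans h₂
  have hk₂ : (m : ℝ) < k + 2 := by linarith [hk.2]
  norm_cast at hk₁ hk₂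
  rcases (by omega : (k : ℕ) + 1 = m ∨ (k : ℕ) = m ∨ (m : ℕ) + 1 = k) with h | h | h
  · exact hi k m h hki
  · exact hu (Fin.ext h ▸ hk)
  · exact hi m k h hki.symm

lemma axisDeriv_mul_eq_indicator (hi : ∀ k l : Fin n, (k : ℕ) + 1 = l → i k ≠ i l)
    (m : Fin n) {g : ℝ → ℝ} {c : ℝ} (hg_mid : ∀ u ∈ Ioo (m : ℝ) (m + 1), g u = c)
    (hg_far : ∀ u ∈ Icc ((m : ℝ) + 2) n, g u = 0) {u : ℝ} (hu : u ∈ Icc ((m : ℝ) - 1) n) :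
    axisDeriv r i u (i m) * g u = (Ioo (m : ℝ) (m + 1)).indicator (fun _ => r m * c) u := by
  by_cases hmid : u ∈ Ioo (m : ℝ) (m + 1)
  · rw [indicator_of_mem hmid, axisDeriv_apply_self r i hmid, hg_mid u hmid]
  rw [indicator_of_notMem hmid]
  rcases lt_or_ge u (m + 2) with hnear | hfar
  · rw [axisDeriv_eq_zero_of_notMem_Ioo r hi hu.1 hnear hmid, zero_mul]
  · rw [hg_far u ⟨hfar, hu.2⟩, mul_zero]

theorem sigCoeff_axisDeriv_drop_ofFn (hi : ∀ k l : Fin n, (k : ℕ) + 1 = l → i k ≠ i l)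
    {m : ℕ} (hm : m ≤ n) {s : ℝ} (hs : s ∈ Icc ((m : ℝ) - 1) n) :
    sigCoeff (axisDeriv r i) ((List.ofFn i).drop m) s n
      = ((List.ofFn r).drop m).prod * volume.real (Ioo (m : ℝ) (m + 1) ∩ Ioi s) := by
  induction hm using Nat.decreasingInduction generalizing s with
  | self =>
    rw [List.drop_eq_nil_of_le (by simp), List.drop_eq_nil_of_le (by simp),
      volume_real_Ioo_inter_Ioi_of_le hs.2]
    simp [sigCoeff]
  | of_succ m hm ih =>
    rw [List.drop_eq_getElem_cons (l := List.ofFn i) (by simpa),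
      List.drop_eq_getElem_cons (l := List.ofFn r) (by simpa), sigCoeff, List.prod_cons]
    simp only [List.getElem_ofFn]
    have hm' : (m : ℝ) + 1 ≤ n := by exact_mod_cast hm
    have hmid : ∀ u ∈ Ioo (m : ℝ) (m + 1), sigCoeff (axisDeriv r i)
        ((List.ofFn i).drop (m + 1)) u n = ((List.ofFn r).drop (m + 1)).prod := by
      intro u hu
      rw [ih ⟨by push_cast; linarith [hu.1], by linarith [hu.2]⟩,
        volume_real_Ioo_inter_Ioi_of_le (by push_cast; linarith [hu.2]), mul_one]
    have hfar : ∀ u ∈ Icc ((m : ℝ) + 2) n, sigCoeff (axisDeriv r i)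
        ((List.ofFn i).drop (m + 1)) u n = 0 := by
      intro u hu
      rw [ih ⟨by push_cast; linarith [hu.1], hu.2⟩,
        volume_real_Ioo_inter_Ioi_of_ge (by push_cast; linarith [hu.1]), mul_zero]
    rw [intervalIntegral.integral_congr fun u hu =>
        axisDeriv_mul_eq_indicator r hi ⟨m, hm⟩ hmid hfar ?_,
      intervalIntegral.integral_indicator_const_of_subset_Iic _ measurableSet_Ioo
        (Ioo_subset_Iio_self.trans (Iio_subset_Iic_self.trans (Iic_subset_Iic.mpr hm'))) hs.2]
    · ring
    · rw [uIcc_of_le hs.2] at hu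
      exact ⟨hs.1.trans hu.1, hu.2⟩

end AxisPath

/-- The signature coefficient of the axis path `(r₁ e_{i₁}) * ⋯ * (r_n e_{i_n})`
(with all `r_k ≠ 0` and adjacent directions distinct) at the square free word
`w* = (i₁, …, i_n)` equals `r₁ ⋯ r_n`; in particular it is nonzero. -/
theorem axis_path_coeff_at_longest_square_free_word
    {d n : ℕ} (r : Fin n → ℝ) (i : Fin n → Fin d)
    (hr : ∀ k, r k ≠ 0)
    (hi : ∀ (k : ℕ) (h : k + 1 < n), i ⟨k, by omega⟩ ≠ i ⟨k + 1, h⟩) :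
    sigCoeff (axisDeriv r i) (List.ofFn i) 0 n = ∏ k, r k ∧
      sigCoeff (axisDeriv r i) (List.ofFn i) 0 n ≠ 0 := by
  have hi' : ∀ k l : Fin n, (k : ℕ) + 1 = l → i k ≠ i l := by
    rintro ⟨k, -⟩ ⟨l, hl⟩ (rfl : k + 1 = l)
    exact hi k hl
  have hcoeff := sigCoeff_axisDeriv_drop_ofFn r hi' n.zero_le (s := 0) ⟨by simp, by simp⟩
  rw [List.drop_zero, List.drop_zero, List.prod_ofFn, Nat.cast_zero,
    volume_real_Ioo_inter_Ioi_of_le le_rfl, mul_one] at hcoeff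
  exact ⟨hcoeff, hcoeff ▸ Finset.prod_ne_zero_iff.mpr fun k _ => hr k⟩
end

section
/- Let γ = (r₁e_{i₁}) * ⋯ * (r_n e_{i_n}) be an axis path in ℝ^d with all r_k ≠ 0 and i_k ≠ i_{k+1} for k = 1,…,n−1, and let w* = (i₁,…,i_n). Then for every square free word w′ with |w′| ≥ n and w′ ≠ w*, the signature coefficient C_γ(w′) = 0. In other words, w* is the unique longest square free word at which the signature coefficient of γ is nonzero. -/
/-!
Chen's identity splits the coefficient of the concatenation `γ' * (r e_a)` at a word `w` into
`∑ C_{γ'}(w.take p) · C_{r e_a}(w.drop p)`. A linear piece in direction `e_a` only sees words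
all of whose letters are `a`, and a square free such word has length at most one. So either
`w.drop p` kills its factor, or `w.take p` is a square free word of length at least `n - 1`
different from `(i₁, …, i_{n-1})`, which kills the other factor by induction on `n`.
-/

open MeasureTheory

namespace List

theorem length_le_one_of_isChain_ne_of_forall_eq {α : Type*} {l : List α} {a : α}
    (hl : l.IsChain (· ≠ ·)) (ha : ∀ b ∈ l, b = a) : l.length ≤ 1 := by
  match l, hl, ha with
  | [], _, _ => simp
  | [_], _, _ => simp
  | x :: y :: _, hl, ha =>
    exact absurd ((ha x (by simp)).trans (ha y (by simp)).symm) (isChain_cons_cons.1 hl).1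

theorem take_ne_or_exists_mem_drop_ne {α : Type*} {w l : List α} {a : α}
    (hw : w.IsChain (· ≠ ·)) (hlen : l.length < w.length) (hne : w ≠ l ++ [a]) (p : ℕ) :
    (l.length ≤ p ∧ w.take p ≠ l) ∨ ∃ b ∈ w.drop p, b ≠ a := by
  by_cases hdrop : ∃ b ∈ w.drop p, b ≠ a
  · exact Or.inr hdrop
  push Not at hdrop
  have hshort := length_le_one_of_isChain_ne_of_forall_eq (hw.drop p) hdrop
  rw [length_drop] at hshort
  refine Or.inl ⟨by omega, fun htake => hne ?_⟩
  have hp : p = l.length := by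
    have := congrArg length htake
    rw [length_take] at this
    omega
  have hsingle : w.drop p = replicate 1 a :=
    eq_replicate_iff.2 ⟨by rw [length_drop]; omega, hdrop⟩
  rw [← take_append_drop p w, htake, hsingle]
  rfl

end List

section sigCoeff

variable {d : ℕ}

@[simp]
theorem sigCoeff_nil (D : ℝ → Fin d → ℝ) (s t : ℝ) : sigCoeff D [] s t = 1 := rfl

theorem sigCoeff_cons (D : ℝ → Fin d → ℝ) (j : Fin d) (w : List (Fin d)) (s t : ℝ) :
    sigCoeff D (j :: w) s t = ∫ u in s..t, D u j * sigCoeff D w u t := rfl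

theorem continuous_sigCoeff {D : ℝ → Fin d → ℝ}
    (hD : ∀ j a b, IntervalIntegrable (fun u => D u j) volume a b) (w : List (Fin d)) (t : ℝ) :
    Continuous fun s => sigCoeff D w s t := by
  induction w with
  | nil => exact continuous_const
  | cons j w ih =>
    have hint a b : IntervalIntegrable (fun u => D u j * sigCoeff D w u t) volume a b :=
      (hD j a b).mul_continuousOn ih.continuousOn
    have hprim : Continuous fun s => ∫ u in t..s, D u j * sigCoeff D w u t :=
      intervalIntegral.continuous_primitive hint t
    simp only [sigCoeff_cons]
    convert hprim.neg using 2 with s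
    exact intervalIntegral.integral_symm _ _

theorem intervalIntegrable_mul_sigCoeff {D : ℝ → Fin d → ℝ}
    (hD : ∀ j a b, IntervalIntegrable (fun u => D u j) volume a b)
    (w : List (Fin d)) (j : Fin d) (t a b : ℝ) :
    IntervalIntegrable (fun u => D u j * sigCoeff D w u t) volume a b :=
  (hD j a b).mul_continuousOn (continuous_sigCoeff hD w t).continuousOn

/-- Chen's identity: concatenating the path on `[a, m]` with the path on `[m, b]`. -/
theorem sigCoeff_eq_sum_take_mul_drop {D : ℝ → Fin d → ℝ}
    (hD : ∀ j a b, IntervalIntegrable (fun u => D u j) volume a b)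
    (w : List (Fin d)) (a m b : ℝ) :
    sigCoeff D w a b = ∑ p ∈ Finset.range (w.length + 1),
      sigCoeff D (w.take p) a m * sigCoeff D (w.drop p) m b := by
  induction w generalizing a with
  | nil => simp
  | cons j w ih =>
    have hsplit : sigCoeff D (j :: w) a b =
        (∫ u in a..m, D u j * sigCoeff D w u b) + sigCoeff D (j :: w) m b :=
      (intervalIntegral.integral_add_adjacent_intervals
        (intervalIntegrable_mul_sigCoeff hD w j b a m)
        (intervalIntegrable_mul_sigCoeff hD w j b m b)).symm
    have hhead (q : ℕ) :
        (∫ u in a..m, D u j * sigCoeff D (w.take q) u m * sigCoeff D (w.drop q) m b)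
          = sigCoeff D (j :: w.take q) a m * sigCoeff D (w.drop q) m b :=
      intervalIntegral.integral_mul_const _ _
    simp_rw [hsplit, ih, Finset.mul_sum, ← mul_assoc]
    rw [intervalIntegral.integral_finsetSum fun q _ =>
        (intervalIntegrable_mul_sigCoeff hD _ j m a m).mul_const _,
      List.length_cons, Finset.sum_range_succ' _ (w.length + 1)]
    simp only [List.take_succ_cons, List.drop_succ_cons, List.take_zero, List.drop_zero, hhead,
      sigCoeff_nil, one_mul]

theorem sigCoeff_congr {D₁ D₂ : ℝ → Fin d → ℝ} {a b : ℝ}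
    (h : ∀ u ∈ Set.Ioo a b, D₁ u = D₂ u) (w : List (Fin d)) {s : ℝ}
    (hs : s ∈ Set.Icc a b) :
    sigCoeff D₁ w s b = sigCoeff D₂ w s b := by
  induction w generalizing s with
  | nil => rfl
  | cons j w ih =>
    refine intervalIntegral.integral_congr_ae ?_
    filter_upwards [volume.ae_ne b] with v hvb hv
    rw [Set.uIoc_of_le hs.2] at hv
    rw [h v ⟨hs.1.trans_lt hv.1, hv.2.lt_of_ne hvb⟩, ih ⟨hs.1.trans hv.1.le, hv.2⟩]

theorem sigCoeff_const (c : Fin d → ℝ) (w : List (Fin d)) (a b : ℝ) :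
    sigCoeff (fun _ => c) w a b = (w.map c).prod * (b - a) ^ w.length / w.length.factorial := by
  induction w generalizing a with
  | nil => simp
  | cons j w ih =>
    have hpow : ∫ u in a..b, (b - u) ^ w.length = (b - a) ^ (w.length + 1) / (w.length + 1) := by
      simp [intervalIntegral.integral_comp_sub_left (· ^ w.length) b, integral_pow]
    have hintegrand : (fun u => c j * sigCoeff (fun _ => c) w u b)
        = fun u => c j * (w.map c).prod / w.length.factorial * (b - u) ^ w.length := by
      ext u
      rw [ih]
      ring
    rw [sigCoeff_cons, hintegrand, intervalIntegral.integral_const_mul, hpow]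
    simp only [List.map_cons, List.prod_cons, List.length_cons, Nat.factorial_succ]
    push_cast
    field_simp

theorem sigCoeff_const_eq_zero {c : Fin d → ℝ} {w : List (Fin d)} (hw : ∃ j ∈ w, c j = 0)
    (a b : ℝ) : sigCoeff (fun _ => c) w a b = 0 := by
  obtain ⟨j, hj, hcj⟩ := hw
  rw [sigCoeff_const, List.prod_eq_zero (hcj ▸ List.mem_map_of_mem hj)]
  simp

end sigCoeff

section axisDeriv

variable {d n : ℕ}

theorem intervalIntegrable_axisDeriv (r : Fin n → ℝ) (i : Fin n → Fin d) (j : Fin d)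
    (a b : ℝ) : IntervalIntegrable (fun u => axisDeriv r i u j) volume a b := by
  have hind : (fun u => axisDeriv r i u j) =
      ∑ k : Fin n, (Set.Ioo (k : ℝ) (k + 1)).indicator fun _ => if i k = j then r k else 0 := by
    ext u
    simp only [axisDeriv, Finset.sum_apply, Set.indicator_apply, Set.mem_Ioo, ← and_assoc,
      ite_and]
  rw [hind]
  refine IntervalIntegrable.sum _ fun k _ => ?_
  rw [intervalIntegrable_iff]
  exact (integrableOn_const (by simp)).indicator measurableSet_Ioo

theorem axisDeriv_eq_axisDeriv_init (r : Fin (n + 1) → ℝ) (i : Fin (n + 1) → Fin d) {u : ℝ}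
    (hu : u ≤ n) :
    axisDeriv r i u = axisDeriv (fun k => r k.castSucc) (fun k => i k.castSucc) u := by
  ext j
  rw [axisDeriv, Fin.sum_univ_castSucc, if_neg (by simp [hu.not_gt]), add_zero]
  rfl

theorem axisDeriv_eq_of_mem_Ioo_last (r : Fin (n + 1) → ℝ) (i : Fin (n + 1) → Fin d) {u : ℝ}
    (hu : u ∈ Set.Ioo (n : ℝ) (n + 1)) :
    axisDeriv r i u = fun j => if i (Fin.last n) = j then r (Fin.last n) else 0 := by
  ext j
  have hinit : ∀ k : Fin n, ¬ ((k : ℝ) < u ∧ u < (k : ℝ) + 1 ∧ i k.castSucc = j) := by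
    rintro k ⟨-, hk, -⟩
    have : (k : ℝ) + 1 ≤ n := by exact_mod_cast k.isLt
    linarith [hu.1]
  simp [axisDeriv, Fin.sum_univ_castSucc, hinit, hu.1, hu.2]

end axisDeriv

/-- For the axis path `(r₁ e_{i₁}) * ⋯ * (r_n e_{i_n})` (with all `r_k ≠ 0` and adjacent
directions distinct), every square free word `w'` of length at least `n` other than
`w* = (i₁, …, i_n)` has vanishing signature coefficient: `w*` is the unique longest
square free word with nonzero coefficient. -/
theorem axis_path_coeff_square_free_vanish
    {d n : ℕ} (r : Fin n → ℝ) (i : Fin n → Fin d)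
    (w' : List (Fin d)) (hsf : w'.Chain' (· ≠ ·)) (hlen : n ≤ w'.length)
    (hne : w' ≠ List.ofFn i) :
    sigCoeff (axisDeriv r i) w' 0 n = 0 := by
  induction n generalizing w' with
  | zero =>
    obtain ⟨j, w, rfl⟩ := List.exists_cons_of_ne_nil (by simpa using hne)
    simp [sigCoeff_cons]
  | succ n ih =>
    have hne' : w' ≠ List.ofFn (fun k => i k.castSucc) ++ [i (Fin.last n)] := by
      rwa [List.ofFn_succ', List.concat_eq_append] at hne
    rw [Nat.cast_succ, sigCoeff_eq_sum_take_mul_drop (intervalIntegrable_axisDeriv r i) w' 0 n]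
    refine Finset.sum_eq_zero fun p _ => ?_
    rcases List.take_ne_or_exists_mem_drop_ne hsf (by simpa using hlen) hne' p with
      ⟨hp, htake⟩ | ⟨b, hb, hba⟩
    · rw [sigCoeff_congr (fun u hu => axisDeriv_eq_axisDeriv_init r i hu.2.le) _
        ⟨le_rfl, n.cast_nonneg⟩, ih _ _ _ (hsf.take p) (by simp at hp ⊢; omega) htake,
        zero_mul]
    · rw [sigCoeff_congr (fun u hu => axisDeriv_eq_of_mem_Ioo_last r i hu) _
        ⟨le_rfl, by linarith⟩, sigCoeff_const_eq_zero ⟨b, hb, if_neg hba.symm⟩, mul_zero]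
end

section
/- Let V = ℝ² with standard basis vectors x and y. For each n ≥ 0 and k ≥ 0 define tensors A_n^k, B_n^k ∈ V^{⊗k} by A_0^k = x^{⊗k}/k!, B_0^k = y^{⊗k}/k!, and recursively A_{n+1}^k = Σ_{j=0}^{k} A_n^j ⊗ B_n^{k−j} and B_{n+1}^k = Σ_{j=0}^{k} B_n^j ⊗ A_n^{k−j}. Then for every n ≥ 0 and every k ≤ n, one has A_n^k = B_n^k. (Equivalently: the lattice paths α^n, β^n defined by α^0 = 1-step in direction x, β^0 = 1-step in direction y, α^{n+1} = α^n * β^n, β^{n+1} = β^n * α^n, have equal signatures up to level n, since by Chen's identity their level-k signature components satisfy exactly this recursion.) -/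
open scoped BigOperators

/-- Let `V = ℝ²` with standard basis vectors `x, y`, and work in the tensor algebra
`T(V) = ⊕_k V^{⊗k}` (where the product of homogeneous elements is the tensor product).
Define the level-`k` tensors `A n k, B n k ∈ V^{⊗k}` by
`A 0 k = x^{⊗k}/k!`, `B 0 k = y^{⊗k}/k!` (the signature components of one-step paths in
directions `x` and `y`), and recursively (by Chen's identity, the signature components of
`α^{n+1} = α^n * β^n` and `β^{n+1} = β^n * α^n`)
`A (n+1) k = Σ_{j=0}^{k} A n j ⊗ B n (k-j)` and `B (n+1) k = Σ_{j=0}^{k} B n j ⊗ A n (k-j)`.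
Then `A n k = B n k` for all `k ≤ n`: the two paths have equal signatures up to level `n`. -/
theorem lattice_paths_equal_signature_up_to_level_n
    (A B : ℕ → ℕ → TensorAlgebra ℝ (Fin 2 → ℝ))
    (hA0 : ∀ k, A 0 k = (k.factorial : ℝ)⁻¹ •
      (TensorAlgebra.ι ℝ (Pi.single (0 : Fin 2) (1 : ℝ))) ^ k)
    (hB0 : ∀ k, B 0 k = (k.factorial : ℝ)⁻¹ •
      (TensorAlgebra.ι ℝ (Pi.single (1 : Fin 2) (1 : ℝ))) ^ k)
    (hA : ∀ n k, A (n + 1) k = ∑ j ∈ Finset.range (k + 1), A n j * B n (k - j))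
    (hB : ∀ n k, B (n + 1) k = ∑ j ∈ Finset.range (k + 1), B n j * A n (k - j)) :
    ∀ n k, k ≤ n → A n k = B n k := by
  -- level-0 components are the scalar 1
  have h0 : ∀ n, A n 0 = 1 ∧ B n 0 = 1 := by
    intro n
    induction n with
    | zero =>
      constructor
      · rw [hA0]; simp [Nat.factorial]
      · rw [hB0]; simp [Nat.factorial]
    | succ n ih =>
      constructor
      · rw [hA n 0]
        simp [Finset.sum_range_one, ih.1, ih.2]
      · rw [hB n 0]
        simp [Finset.sum_range_one, ih.1, ih.2]
  intro n
  induction n with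
  | zero =>
    intro k hk
    interval_cases k
    rw [(h0 0).1, (h0 0).2]
  | succ n ih =>
    intro k hk
    rcases Nat.lt_or_ge k (n + 1) with hkn | hkn
    · -- k ≤ n : all terms match by the induction hypothesis
      rw [hA, hB]
      apply Finset.sum_congr rfl
      intro j hj
      have hj' : j ≤ k := Nat.lt_succ_iff.mp (Finset.mem_range.mp hj)
      have h1 : j ≤ n := le_trans hj' (Nat.lt_succ_iff.mp hkn)
      have h2 : k - j ≤ n := le_trans (Nat.sub_le k j) (Nat.lt_succ_iff.mp hkn)
      rw [ih j h1, ih (k - j) h2]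
    · -- k = n + 1 : boundary terms cancel since level-0 components are 1
      have hkeq : k = n + 1 := le_antisymm hk hkn
      subst hkeq
      rw [hA, hB]
      have split : ∀ f : ℕ → TensorAlgebra ℝ (Fin 2 → ℝ),
          ∑ j ∈ Finset.range (n + 1 + 1), f j
            = ∑ j ∈ Finset.range n, f (j + 1) + f 0 + f (n + 1) := by
        intro f
        rw [Finset.sum_range_succ, Finset.sum_range_succ']
      rw [split, split]
      have hmid : ∀ j ∈ Finset.range n,
          A n (j + 1) * B n (n + 1 - (j + 1)) = B n (j + 1) * A n (n + 1 - (j + 1)) := by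
        intro j hj
        have hj' : j < n := Finset.mem_range.mp hj
        have h1 : j + 1 ≤ n := hj'
        have h2 : n + 1 - (j + 1) ≤ n := by omega
        rw [ih (j + 1) h1, ih (n + 1 - (j + 1)) h2]
      rw [Finset.sum_congr rfl hmid]
      simp only [Nat.sub_zero, Nat.sub_self, (h0 n).1, (h0 n).2, one_mul, mul_one]
      abel
end

section
/- Let θ : [0,1] → ℝ^d be continuous with |θ(t)| = 1 for all t, let λ, L > 0, and define F : ℝ^d → M_{d+1}(ℝ) by F(x) = [[0, x],[xᵀ, 0]] in block form. Suppose Γ : [0,1] → M_{d+1}(ℝ) is differentiable with Γ(0) = I_{d+1} and Γ′(t) = F(λLθ(t)) Γ(t) for all t, and suppose η : (0,1] → ℝ^d and ρ : (0,1] → (0,∞) are differentiable functions with |η(t)| = 1 such that Γ(t)o = (η(t) sinh ρ(t), cosh ρ(t))ᵀ for all t ∈ (0,1], where o = (0,…,0,1)ᵀ ∈ ℝ^{d+1}. Then for all t ∈ (0,1]: η′(t) = λL coth(ρ(t)) (θ(t) − ⟨θ(t), η(t)⟩ η(t)) and ρ′(t) = λL ⟨θ(t), η(t)⟩. -/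
open Real Set

/-- The linear map `F : ℝ^d → so(d,1) ⊂ M_{d+1}(ℝ)`, `F(x) = [[0, x], [xᵀ, 0]]` in
`(d,1)`-block form (the index type `Fin d ⊕ Unit` realizes `{1,…,d+1}`). -/
noncomputable def cartanF {d : ℕ} (x : Fin d → ℝ) :
    Matrix (Fin d ⊕ Unit) (Fin d ⊕ Unit) ℝ :=
  Matrix.fromBlocks 0 (Matrix.of fun i _ => x i) (Matrix.of fun _ j => x j) 0

/-!
Differentiating `Γ(t)o` with the ODE gives the velocity `F(λLθ)·Γ(t)o = F(λLθ)·(η sinh ρ, cosh ρ)`,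
i.e. `(λLθ cosh ρ, λL⟨θ,η⟩ sinh ρ)`; differentiating the polar form gives
`(η' sinh ρ + η cosh ρ · ρ', sinh ρ · ρ')`. The two agree because the curves coincide on `(0,1]`,
where derivatives within the interval are unique (also at the endpoint `t = 1`). Comparing the last
coordinates and dividing by `sinh ρ > 0` gives `ρ'`, and then the first `d` coordinates give `η'`.
-/

open Matrix

section

variable {d : ℕ}

noncomputable def hyperboloidPolar (η : EuclideanSpace ℝ (Fin d)) (ρ : ℝ) :
    Fin d ⊕ Unit → ℝ :=
  Sum.elim (fun i => η i * sinh ρ) (fun _ => cosh ρ)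

theorem cartanF_mulVec_hyperboloidPolar (x η : EuclideanSpace ℝ (Fin d)) (ρ : ℝ) :
    cartanF x *ᵥ hyperboloidPolar η ρ =
      Sum.elim (fun i => x i * cosh ρ) (fun _ => inner ℝ x η * sinh ρ) := by
  ext (i | _) <;>
    simp [cartanF, hyperboloidPolar, mulVec, dotProduct, Fintype.sum_sum_type,
      PiLp.inner_apply, Finset.mul_sum, mul_left_comm, mul_comm]

theorem hasDerivAt_hyperboloidPolar {η : ℝ → EuclideanSpace ℝ (Fin d)} {ρ : ℝ → ℝ}
    {η' : EuclideanSpace ℝ (Fin d)} {ρ' t : ℝ} (hη : HasDerivAt η η' t)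
    (hρ : HasDerivAt ρ ρ' t) :
    HasDerivAt (fun s => hyperboloidPolar (η s) (ρ s))
      (Sum.elim (fun i => η' i * sinh (ρ t) + η t i * (cosh (ρ t) * ρ'))
        (fun _ => sinh (ρ t) * ρ')) t := by
  refine hasDerivAt_pi.2 fun
    | .inl i => ?_
    | .inr _ => (hasDerivAt_cosh (ρ t)).comp t hρ
  have hηi : HasDerivAt (fun s => η s i) (η' i) t :=
    (EuclideanSpace.proj (𝕜 := ℝ) i).hasFDerivAt.comp_hasDerivAt t hη
  exact hηi.mul ((hasDerivAt_sinh (ρ t)).comp t hρ)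

theorem HasDerivAt.mulVec_const {m n : Type*} [Fintype n] {Γ : ℝ → Matrix m n ℝ}
    {Γ' : Matrix m n ℝ} {t : ℝ} (hΓ : ∀ a b, HasDerivAt (fun s => Γ s a b) (Γ' a b) t)
    (v : n → ℝ) : HasDerivAt (fun s => Γ s *ᵥ v) (Γ' *ᵥ v) t :=
  hasDerivAt_pi.2 fun a => by
    simpa only [mulVec, dotProduct] using HasDerivAt.fun_sum fun b _ => (hΓ a b).mul_const (v b)

theorem polar_velocity_of_eq_cartanF_mulVec {x η η' : EuclideanSpace ℝ (Fin d)} {ρ ρ' : ℝ}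
    (hρ : sinh ρ ≠ 0)
    (h : Sum.elim (fun i => η' i * sinh ρ + η i * (cosh ρ * ρ')) (fun _ => sinh ρ * ρ') =
      cartanF x *ᵥ hyperboloidPolar η ρ) :
    η' = (cosh ρ / sinh ρ) • (x - inner ℝ x η • η) ∧ ρ' = inner ℝ x η := by
  rw [cartanF_mulVec_hyperboloidPolar] at h
  have hlast := congrFun h (.inr ())
  have hfirst i := congrFun h (.inl i)
  simp only [Sum.elim_inr, Sum.elim_inl] at hlast hfirst
  have hρ' : ρ' = inner ℝ x η := mul_left_cancel₀ hρ (hlast.trans (mul_comm _ _))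
  refine ⟨?_, hρ'⟩
  ext i
  rw [PiLp.smul_apply, PiLp.sub_apply, PiLp.smul_apply, smul_eq_mul, smul_eq_mul,
    div_mul_eq_mul_div, eq_div_iff hρ]
  linear_combination hfirst i - η i * cosh ρ * hρ'

end

theorem hyperbolic_development_ODE_general
    {d : ℕ} (θ : ℝ → EuclideanSpace ℝ (Fin d))
    (lam L : ℝ)
    (Γ : ℝ → Matrix (Fin d ⊕ Unit) (Fin d ⊕ Unit) ℝ)
    (hΓ : ∀ t ∈ Icc (0 : ℝ) 1, ∀ a b, HasDerivAt (fun s => Γ s a b)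
      ((cartanF (fun i => lam * L * θ t i) * Γ t) a b) t)
    (η : ℝ → EuclideanSpace ℝ (Fin d)) (ρ : ℝ → ℝ)
    (hρpos : ∀ t ∈ Ioc (0 : ℝ) 1, 0 < ρ t)
    (hηd : ∀ t ∈ Ioc (0 : ℝ) 1, DifferentiableAt ℝ η t)
    (hρd : ∀ t ∈ Ioc (0 : ℝ) 1, DifferentiableAt ℝ ρ t)
    (hdev : ∀ t ∈ Ioc (0 : ℝ) 1,
      (Γ t).mulVec (Sum.elim (0 : Fin d → ℝ) (fun _ => 1)) =
        Sum.elim (fun i => η t i * Real.sinh (ρ t)) (fun _ => Real.cosh (ρ t))) :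
    ∀ t ∈ Ioc (0 : ℝ) 1,
      deriv η t = (lam * L * (Real.cosh (ρ t) / Real.sinh (ρ t))) •
          (θ t - (inner ℝ (θ t) (η t) : ℝ) • η t) ∧
        deriv ρ t = lam * L * (inner ℝ (θ t) (η t) : ℝ) := by
  intro t ht
  have hpoint : ∀ s ∈ Ioc (0 : ℝ) 1,
      Γ s *ᵥ Sum.elim 0 (fun _ => 1) = hyperboloidPolar (η s) (ρ s) := hdev
  have hmoving := HasDerivAt.mulVec_const (hΓ t (Ioc_subset_Icc_self ht)) (Sum.elim 0 fun _ => 1)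
  rw [← mulVec_mulVec, hpoint t ht, show cartanF (fun i => lam * L * θ t i) =
    cartanF ((lam * L) • θ t) from rfl] at hmoving
  have hpolar := hasDerivAt_hyperboloidPolar (hηd t ht).hasDerivAt (hρd t ht).hasDerivAt
  have hvel := (uniqueDiffOn_Ioc 0 1 t ht).eq_deriv _ hpolar.hasDerivWithinAt
    (hmoving.hasDerivWithinAt.congr_of_mem (fun s hs => (hpoint s hs).symm) ht)
  obtain ⟨hη', hρ'⟩ := polar_velocity_of_eq_cartanF_mulVec (sinh_pos_iff.2 (hρpos t ht)).ne' hvel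
  rw [real_inner_smul_left] at hη' hρ'
  exact ⟨hη'.trans (by module), hρ'⟩

/-- Let `θ : [0,1] → ℝ^d` be continuous and unit-valued, `lam, L > 0`, and let
`Γ` be the Cartan development of the rescaled path, i.e. `Γ(0) = I` and
`Γ′(t) = F(lam·L·θ(t)) Γ(t)`.  Suppose the development `Γ(t)o` of the rescaled path on the
hyperboloid is written in polar coordinates `(η(t) sinh ρ(t), cosh ρ(t))` with `η`
unit-valued and `η, ρ` differentiable on `(0,1]`.  Then on `(0,1]`:
`η′ = lam·L·coth(ρ)(θ − ⟨θ,η⟩η)` and `ρ′ = lam·L·⟨θ,η⟩`. -/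
theorem hyperbolic_development_ODE
    {d : ℕ} (θ : ℝ → EuclideanSpace ℝ (Fin d))
    (hθc : ContinuousOn θ (Icc 0 1)) (hθ1 : ∀ t ∈ Icc (0 : ℝ) 1, ‖θ t‖ = 1)
    (lam L : ℝ) (hlam : 0 < lam) (hL : 0 < L)
    (Γ : ℝ → Matrix (Fin d ⊕ Unit) (Fin d ⊕ Unit) ℝ)
    (hΓ0 : Γ 0 = 1)
    (hΓ : ∀ t ∈ Icc (0 : ℝ) 1, ∀ a b, HasDerivAt (fun s => Γ s a b)
      ((cartanF (fun i => lam * L * θ t i) * Γ t) a b) t)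
    (η : ℝ → EuclideanSpace ℝ (Fin d)) (ρ : ℝ → ℝ)
    (hη1 : ∀ t ∈ Ioc (0 : ℝ) 1, ‖η t‖ = 1)
    (hρpos : ∀ t ∈ Ioc (0 : ℝ) 1, 0 < ρ t)
    (hηd : ∀ t ∈ Ioc (0 : ℝ) 1, DifferentiableAt ℝ η t)
    (hρd : ∀ t ∈ Ioc (0 : ℝ) 1, DifferentiableAt ℝ ρ t)
    (hdev : ∀ t ∈ Ioc (0 : ℝ) 1,
      (Γ t).mulVec (Sum.elim (0 : Fin d → ℝ) (fun _ => 1)) =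
        Sum.elim (fun i => η t i * Real.sinh (ρ t)) (fun _ => Real.cosh (ρ t))) :
    ∀ t ∈ Ioc (0 : ℝ) 1,
      deriv η t = (lam * L * (Real.cosh (ρ t) / Real.sinh (ρ t))) •
          (θ t - (inner ℝ (θ t) (η t) : ℝ) • η t) ∧
        deriv ρ t = lam * L * (inner ℝ (θ t) (η t) : ℝ) :=
  hyperbolic_development_ODE_general θ lam L Γ hΓ η ρ hρpos hηd hρd hdev
end

section
/- Assume L = 1. For every constant C > sup_{t∈[0,1]} |θ′(t)| there exists Λ > 0 such that for all λ ≥ Λ, sup_{t∈[0,1]} |f_λ(t)| ≤ C/λ, where f_λ = η_λ − θ. -/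
open Real Set Filter
open scoped InnerProductSpace Topology

/-!
Let `u = ‖η − θ‖²`. At unit vectors, `⟪θ, η⟫ = 1 − u/2`, so the tangential term of the ODE
contributes `2κ(⟪θ, η⟫² − 1) = −2κ u (1 − u/4)` to `u'`, with `κ = λ coth ρ ≥ λ`, while the motion
of `θ` contributes at most `2 √u · sup ‖θ'‖`. On the sphere `√u = C/λ` the first term wins as soon
as `λ (C/λ)(1 − (C/λ)²/4) > sup ‖θ'‖`, which holds for large `λ` because the left side tends to `C`.
Hence `u` can never reach `(C/λ)²`, starting from `u(0) = 0`.
-/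

theorem IsCompact.le_biSup_of_continuousOn {X α : Type*} [TopologicalSpace X]
    [ConditionallyCompleteLinearOrder α] [TopologicalSpace α] [OrderTopology α]
    {K : Set X} {f : X → α} (hK : IsCompact K) (hf : ContinuousOn f K) {x : X} (hx : x ∈ K) :
    f x ≤ ⨆ y ∈ K, f y :=
  le_ciSup₂ (f := fun y (_ : y ∈ K) => f y)
    ((hK.bddAbove_image hf).mono (by rintro _ ⟨_, ⟨y, rfl⟩, ⟨hy, rfl⟩⟩; exact ⟨y, hy, rfl⟩)) x hx

theorem Real.one_le_cosh_div_sinh {x : ℝ} (hx : 0 < x) : 1 ≤ cosh x / sinh x :=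
  (one_le_div (sinh_pos_iff.2 hx)).2 (sinh_lt_cosh x).le

theorem image_le_of_lt_left_of_deriv_neg_boundary {u u' : ℝ → ℝ} {a b B : ℝ}
    (hu : ContinuousOn u (Icc a b)) (ha : u a < B)
    (hu' : ∀ x ∈ Ioo a b, HasDerivAt u (u' x) x) (bound : ∀ x ∈ Ioo a b, u x = B → u' x < 0) :
    ∀ x ∈ Icc a b, u x ≤ B := by
  rintro x ⟨hax, hxb⟩
  rcases hax.eq_or_lt with rfl | hax
  · exact ha.le
  -- `u` need not be differentiable at `a`, so fence from a point `ε > a` where still `u ε < B`.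
  have hnear : ∀ᶠ y in 𝓝[>] a, u y < B :=
    ((hu a ⟨le_rfl, hax.le.trans hxb⟩).mono_of_mem_nhdsWithin
      (Icc_mem_nhdsGT (hax.trans_le hxb))).eventually (gt_mem_nhds ha)
  obtain ⟨ε, huε, hε⟩ := (hnear.and (Ioo_mem_nhdsGT hax)).exists
  exact image_le_of_deriv_right_lt_deriv_boundary (hu.mono (Icc_subset_Icc_left hε.1.le))
    (fun y hy => (hu' y ⟨hε.1.trans_le hy.1, hy.2⟩).hasDerivWithinAt) huε.le
    (fun _ => hasDerivAt_const _ B)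
    (fun y hy => bound y ⟨hε.1.trans_le hy.1, hy.2⟩) ⟨hε.2.le, hxb⟩

section UnitVectors

variable {E : Type*} [NormedAddCommGroup E] [InnerProductSpace ℝ E] {x y : E}

theorem inner_eq_one_sub_norm_sub_sq_div_two (hx : ‖x‖ = 1) (hy : ‖y‖ = 1) :
    ⟪x, y⟫_ℝ = 1 - ‖y - x‖ ^ 2 / 2 := by
  rw [norm_sub_sq_real, hx, hy, real_inner_comm]
  ring

theorem inner_sub_sub_inner_smul (hx : ‖x‖ = 1) (hy : ‖y‖ = 1) :
    ⟪y - x, x - ⟪x, y⟫_ℝ • y⟫_ℝ = ⟪x, y⟫_ℝ ^ 2 - 1 := by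
  have hxx : ⟪x, x⟫_ℝ = 1 := by rw [real_inner_self_eq_norm_sq, hx, one_pow]
  have hyy : ⟪y, y⟫_ℝ = 1 := by rw [real_inner_self_eq_norm_sq, hy, one_pow]
  rw [inner_sub_left, inner_sub_right, inner_sub_right, real_inner_smul_right,
    real_inner_smul_right, hxx, hyy, real_inner_comm y x]
  ring

theorem mul_inner_sq_sub_one_sub_inner_neg {v : E} {k lam M r : ℝ} (hx : ‖x‖ = 1)
    (hy : ‖y‖ = 1) (hr : ‖y - x‖ = r) (hv : ‖v‖ ≤ M) (hk : lam ≤ k)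
    (hcrit : M < lam * r * (1 - r ^ 2 / 4)) :
    k * (⟪x, y⟫_ℝ ^ 2 - 1) - ⟪y - x, v⟫_ℝ < 0 := by
  have hr2 : r ≤ 2 := by
    rw [← hr]
    linarith [norm_sub_le y x]
  have hr0 : 0 < r := by
    refine (hr ▸ norm_nonneg _).lt_of_ne ?_
    rintro rfl
    linarith [(norm_nonneg v).trans hv]
  have hsq : ⟪x, y⟫_ℝ ^ 2 - 1 = -(r * (r * (1 - r ^ 2 / 4))) := by
    rw [inner_eq_one_sub_norm_sub_sq_div_two hx hy, hr]
    ring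
  have hsq_nonpos : ⟪x, y⟫_ℝ ^ 2 - 1 ≤ 0 := by
    rw [hsq, neg_nonpos]
    have : 0 ≤ 1 - r ^ 2 / 4 := by nlinarith
    positivity
  have hdrift : -⟪y - x, v⟫_ℝ ≤ r * M := by
    have := neg_abs_le ⟪y - x, v⟫_ℝ
    have := abs_real_inner_le_norm (y - x) v
    rw [hr] at this
    nlinarith [mul_le_mul_of_nonneg_left hv hr0.le]
  calc k * (⟪x, y⟫_ℝ ^ 2 - 1) - ⟪y - x, v⟫_ℝ
      ≤ lam * (⟪x, y⟫_ℝ ^ 2 - 1) + r * M := by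
        linarith [mul_le_mul_of_nonpos_right hk hsq_nonpos]
    _ = r * (M - lam * r * (1 - r ^ 2 / 4)) := by rw [hsq]; ring
    _ < 0 := mul_neg_of_pos_of_neg hr0 (by linarith)

theorem hasDerivAt_norm_sub_sq_of_tangent {η θ : ℝ → E} {θ' : E} {k t : ℝ}
    (hη : HasDerivAt η (k • (θ t - ⟪θ t, η t⟫_ℝ • η t)) t) (hθ : HasDerivAt θ θ' t)
    (hη1 : ‖η t‖ = 1) (hθ1 : ‖θ t‖ = 1) :
    HasDerivAt (fun s => ‖η s - θ s‖ ^ 2)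
      (2 * (k * (⟪θ t, η t⟫_ℝ ^ 2 - 1) - ⟪η t - θ t, θ'⟫_ℝ)) t := by
  refine (hη.sub hθ).norm_sq.congr_deriv ?_
  rw [Pi.sub_apply, inner_sub_right, real_inner_smul_right, inner_sub_sub_inner_smul hθ1 hη1]

theorem norm_sub_le_of_hasDerivAt_tangent {η θ θ' : ℝ → E} {κ : ℝ → ℝ} {a b lam M r : ℝ}
    (hθ1 : ∀ t ∈ Icc a b, ‖θ t‖ = 1) (hθd : ∀ t ∈ Icc a b, HasDerivAt θ (θ' t) t)
    (hθ'M : ∀ t ∈ Icc a b, ‖θ' t‖ ≤ M) (hη1 : ∀ t ∈ Icc a b, ‖η t‖ = 1)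
    (hηc : ContinuousOn η (Icc a b)) (hηa : η a = θ a)
    (hηd : ∀ t ∈ Ioo a b, HasDerivAt η (κ t • (θ t - ⟪θ t, η t⟫_ℝ • η t)) t)
    (hκ : ∀ t ∈ Ioo a b, lam ≤ κ t) (hr : 0 < r) (hcrit : M < lam * r * (1 - r ^ 2 / 4)) :
    ∀ t ∈ Icc a b, ‖η t - θ t‖ ≤ r := by
  have hθc : ContinuousOn θ (Icc a b) := fun t ht => (hθd t ht).continuousAt.continuousWithinAt
  have hsq : ∀ t ∈ Icc a b, ‖η t - θ t‖ ^ 2 ≤ r ^ 2 := by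
    refine image_le_of_lt_left_of_deriv_neg_boundary ((hηc.sub hθc).norm.pow 2)
      (by simp [hηa, hr]) (fun t ht => hasDerivAt_norm_sub_sq_of_tangent (hηd t ht)
        (hθd t (Ioo_subset_Icc_self ht)) (hη1 t (Ioo_subset_Icc_self ht))
        (hθ1 t (Ioo_subset_Icc_self ht))) fun t ht hu => ?_
    have ht' := Ioo_subset_Icc_self ht
    exact mul_neg_of_pos_of_neg two_pos <| mul_inner_sq_sub_one_sub_inner_neg (hθ1 t ht')
      (hη1 t ht') ((pow_left_inj₀ (norm_nonneg _) hr.le two_ne_zero).1 hu) (hθ'M t ht')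
      (hκ t ht) hcrit
  exact fun t ht => (pow_le_pow_iff_left₀ (norm_nonneg _) hr.le two_ne_zero).1 (hsq t ht)

end UnitVectors

theorem step1_first_order_bound_general
    {d : ℕ}
    (θ θ' : ℝ → EuclideanSpace ℝ (Fin d))
    (hθ1 : ∀ t ∈ Icc (0 : ℝ) 1, ‖θ t‖ = 1)
    (hθd : ∀ t ∈ Icc (0 : ℝ) 1, HasDerivAt θ (θ' t) t)
    (hθ'c : ContinuousOn θ' (Icc 0 1))
    (η : ℝ → ℝ → EuclideanSpace ℝ (Fin d)) (ρ : ℝ → ℝ → ℝ)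
    (hηc : ∀ lam > (0 : ℝ), ContinuousOn (η lam) (Icc 0 1))
    (hη1 : ∀ lam > (0 : ℝ), ∀ t ∈ Icc (0 : ℝ) 1, ‖η lam t‖ = 1)
    (hη0 : ∀ lam > (0 : ℝ), η lam 0 = θ 0)
    (hρpos : ∀ lam > (0 : ℝ), ∀ t ∈ Ioc (0 : ℝ) 1, 0 < ρ lam t)
    (hODE : ∀ lam > (0 : ℝ), ∀ t ∈ Ioc (0 : ℝ) 1,
      HasDerivAt (η lam)
        ((lam * (Real.cosh (ρ lam t) / Real.sinh (ρ lam t))) •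
          (θ t - (inner ℝ (θ t) (η lam t) : ℝ) • η lam t)) t ∧
      HasDerivAt (ρ lam) (lam * (inner ℝ (θ t) (η lam t) : ℝ)) t)
    (C : ℝ) (hC : (⨆ t ∈ Icc (0 : ℝ) 1, ‖θ' t‖) < C) :
    ∃ Λ > (0 : ℝ), ∀ lam ≥ Λ, ∀ t ∈ Icc (0 : ℝ) 1, ‖η lam t - θ t‖ ≤ C / lam := by
  set M := ⨆ t ∈ Icc (0 : ℝ) 1, ‖θ' t‖
  have hθ'M : ∀ t ∈ Icc (0 : ℝ) 1, ‖θ' t‖ ≤ M := fun t ht =>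
    isCompact_Icc.le_biSup_of_continuousOn hθ'c.norm ht
  have hC0 : 0 < C := ((norm_nonneg _).trans (hθ'M 0 ⟨le_rfl, zero_le_one⟩)).trans_lt hC
  have hpull : Tendsto (fun lam : ℝ => C * (1 - (C / lam) ^ 2 / 4)) atTop (𝓝 C) := by
    have h := (tendsto_const_nhds (x := C)).div_atTop tendsto_id
    simpa using (tendsto_const_nhds (x := C)).mul
      ((tendsto_const_nhds (x := (1 : ℝ))).sub ((h.pow 2).div_const 4))
  have hlarge : ∀ᶠ lam in atTop, 0 < lam ∧ M < lam * (C / lam) * (1 - (C / lam) ^ 2 / 4) := by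
    filter_upwards [hpull.eventually (lt_mem_nhds hC), eventually_gt_atTop 0] with lam h hlam
    exact ⟨hlam, by rwa [mul_div_cancel₀ C hlam.ne']⟩
  obtain ⟨Λ, hΛ⟩ := eventually_atTop.1 hlarge
  refine ⟨max Λ 1, by positivity, fun lam hlam => ?_⟩
  obtain ⟨hlam0, hcrit⟩ := hΛ lam (le_of_max_le_left hlam)
  exact norm_sub_le_of_hasDerivAt_tangent hθ1 hθd hθ'M (hη1 lam hlam0) (hηc lam hlam0)
    (hη0 lam hlam0) (fun t ht => (hODE lam hlam0 t (Ioo_subset_Ioc_self ht)).1)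
    (fun t ht => le_mul_of_one_le_right hlam0.le
      (one_le_cosh_div_sinh (hρpos lam hlam0 t (Ioo_subset_Ioc_self ht))))
    (div_pos hC0 hlam0) hcrit

/-- Setting as in the hyperbolic-development theorems, with `L = 1`:
`θ : [0,1] → S^{d-1}` is C¹ with derivative `θ'`, and for each `lam > 0` the pair
`(η lam, ρ lam)` solves the development ODE system.  Writing `f_lam = η lam − θ`:
for every constant `C > sup_{t ∈ [0,1]} |θ′(t)|` there is `Λ > 0` such that for all
`lam ≥ Λ`, `sup_{t∈[0,1]} |f_lam(t)| ≤ C / lam`. -/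
theorem step1_first_order_bound
    {d : ℕ} (hd : 0 < d)
    (θ θ' : ℝ → EuclideanSpace ℝ (Fin d))
    (hθ1 : ∀ t ∈ Icc (0 : ℝ) 1, ‖θ t‖ = 1)
    (hθd : ∀ t ∈ Icc (0 : ℝ) 1, HasDerivAt θ (θ' t) t)
    (hθ'c : ContinuousOn θ' (Icc 0 1))
    (η : ℝ → ℝ → EuclideanSpace ℝ (Fin d)) (ρ : ℝ → ℝ → ℝ)
    (hηc : ∀ lam > (0 : ℝ), ContinuousOn (η lam) (Icc 0 1))
    (hρc : ∀ lam > (0 : ℝ), ContinuousOn (ρ lam) (Icc 0 1))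
    (hη1 : ∀ lam > (0 : ℝ), ∀ t ∈ Icc (0 : ℝ) 1, ‖η lam t‖ = 1)
    (hη0 : ∀ lam > (0 : ℝ), η lam 0 = θ 0)
    (hρ0 : ∀ lam > (0 : ℝ), ρ lam 0 = 0)
    (hρpos : ∀ lam > (0 : ℝ), ∀ t ∈ Ioc (0 : ℝ) 1, 0 < ρ lam t)
    (hODE : ∀ lam > (0 : ℝ), ∀ t ∈ Ioc (0 : ℝ) 1,
      HasDerivAt (η lam)
        ((lam * (Real.cosh (ρ lam t) / Real.sinh (ρ lam t))) •
          (θ t - (inner ℝ (θ t) (η lam t) : ℝ) • η lam t)) t ∧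
      HasDerivAt (ρ lam) (lam * (inner ℝ (θ t) (η lam t) : ℝ)) t)
    (C : ℝ) (hC : (⨆ t ∈ Icc (0 : ℝ) 1, ‖θ' t‖) < C) :
    ∃ Λ > (0 : ℝ), ∀ lam ≥ Λ, ∀ t ∈ Icc (0 : ℝ) 1, ‖η lam t - θ t‖ ≤ C / lam :=
  step1_first_order_bound_general θ θ' hθ1 hθd hθ'c η ρ hηc hη1 hη0 hρpos hODE C hC
end

section
/- Let θ, η ∈ ℝ^d be unit vectors, let ρ ≥ 0, s > 0, and δ ∈ (0,1], and suppose |⟨θ, η⟩| ≤ 1 − δ. Then the quantity q = ⟨θ, η⟩ sinh(s) sinh(ρ) + cosh(s) cosh(ρ) (the hyperbolic-cosine coordinate of the point obtained by applying the line development matrix M(s,θ) to the hyperboloid point (η sinh ρ, cosh ρ)) satisfies (δ/2) cosh(ρ + s) ≤ q ≤ cosh(ρ + s). -/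
open Real Set

/-! Write `a = ⟨θ, η⟩` and `q = a sinh s sinh ρ + cosh s cosh ρ`. Since `sinh s sinh ρ ≥ 0`,
`a ≤ 1` gives `q ≤ cosh(ρ + s)` by the addition formula. For the lower bound,
`q - (δ/2) cosh(ρ + s) = (a + 1 - δ) sinh s sinh ρ + (1 - δ/2) cosh(ρ - s)`,
and both terms are nonnegative when `a ≥ -(1 - δ)` and `δ ≤ 2`. -/

lemma mul_sinh_mul_sinh_add_cosh_mul_cosh_le_cosh_add {a x y : ℝ} (ha : a ≤ 1)
    (hx : 0 ≤ x) (hy : 0 ≤ y) :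
    a * sinh y * sinh x + cosh y * cosh x ≤ cosh (x + y) := by
  have hsinh : 0 ≤ sinh y * sinh x := mul_nonneg (sinh_nonneg_iff.mpr hy) (sinh_nonneg_iff.mpr hx)
  rw [cosh_add, mul_assoc]
  linarith [mul_le_of_le_one_left hsinh ha]

lemma half_mul_cosh_add_le_mul_sinh_mul_sinh_add_cosh_mul_cosh {a δ x y : ℝ}
    (ha : -(1 - δ) ≤ a) (hδ : δ ≤ 2) (hx : 0 ≤ x) (hy : 0 ≤ y) :
    δ / 2 * cosh (x + y) ≤ a * sinh y * sinh x + cosh y * cosh x := by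
  have hsinh : 0 ≤ sinh y * sinh x := mul_nonneg (sinh_nonneg_iff.mpr hy) (sinh_nonneg_iff.mpr hx)
  have hdiff : a * sinh y * sinh x + cosh y * cosh x - δ / 2 * cosh (x + y)
      = (a + 1 - δ) * (sinh y * sinh x) + (1 - δ / 2) * cosh (x - y) := by
    rw [cosh_add, cosh_sub]; ring
  have hnonneg : 0 ≤ (a + 1 - δ) * (sinh y * sinh x) + (1 - δ / 2) * cosh (x - y) :=
    add_nonneg (mul_nonneg (by linarith) hsinh) (mul_nonneg (by linarith) (cosh_pos _).le)
  linarith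

theorem cosh_coordinate_bounds_general
    {d : ℕ} (θ η : EuclideanSpace ℝ (Fin d))
    (ρ s δ : ℝ) (hρ : 0 ≤ ρ) (hs : 0 < s) (hδ : δ ∈ Ioc (0 : ℝ) 1)
    (hip : |(inner ℝ θ η : ℝ)| ≤ 1 - δ) :
    δ / 2 * Real.cosh (ρ + s) ≤
        (inner ℝ θ η : ℝ) * Real.sinh s * Real.sinh ρ + Real.cosh s * Real.cosh ρ ∧
      (inner ℝ θ η : ℝ) * Real.sinh s * Real.sinh ρ + Real.cosh s * Real.cosh ρ ≤
        Real.cosh (ρ + s) := by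
  obtain ⟨hδ0, hδ1⟩ := hδ
  obtain ⟨hlower, hupper⟩ := abs_le.mp hip
  exact ⟨half_mul_cosh_add_le_mul_sinh_mul_sinh_add_cosh_mul_cosh hlower (by linarith) hρ hs.le,
    mul_sinh_mul_sinh_add_cosh_mul_cosh_le_cosh_add (by linarith) hρ hs.le⟩

/-- Let `θ, η ∈ ℝ^d` be unit vectors, `ρ ≥ 0`, `s > 0`, `δ ∈ (0,1]`, and suppose
`|⟨θ, η⟩| ≤ 1 − δ`.  Then the hyperbolic-cosine coordinate
`q = ⟨θ,η⟩ sinh(s) sinh(ρ) + cosh(s) cosh(ρ)` of the image of the hyperboloid point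
`(η sinh ρ, cosh ρ)` under the line development matrix `M(s,θ)` satisfies
`(δ/2) cosh(ρ + s) ≤ q ≤ cosh(ρ + s)`. -/
theorem cosh_coordinate_bounds
    {d : ℕ} (θ η : EuclideanSpace ℝ (Fin d)) (hθ : ‖θ‖ = 1) (hη : ‖η‖ = 1)
    (ρ s δ : ℝ) (hρ : 0 ≤ ρ) (hs : 0 < s) (hδ : δ ∈ Ioc (0 : ℝ) 1)
    (hip : |(inner ℝ θ η : ℝ)| ≤ 1 - δ) :
    δ / 2 * Real.cosh (ρ + s) ≤
        (inner ℝ θ η : ℝ) * Real.sinh s * Real.sinh ρ + Real.cosh s * Real.cosh ρ ∧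
      (inner ℝ θ η : ℝ) * Real.sinh s * Real.sinh ρ + Real.cosh s * Real.cosh ρ ≤
        Real.cosh (ρ + s) :=
  cosh_coordinate_bounds_general θ η ρ s δ hρ hs hδ hip
end
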